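/- arXiv:2602.04440 — 5 statements merged into one kernel-verified Lean document; each statement's English description precedes it below -/
import Mathlib

section
/- Let a_1, …, a_n (n ≥ 1) be nonzero elements of R, and for each i set â_i = ∏_{j ≠ i} a_j (the product of all the a_j with j ≠ i). Then gcd(â_1, â_2, …, â_n) · lcm(a_1, …, a_n) is associated (equal up to multiplication by a unit of R) to the product a_1 · a_2 ⋯ a_n. -/
/-!
With `P = ∏ i, a i` and `â i = P / a i`, a factorisation `d * e = P` satisfies
`d ∣ â i ↔ a i ∣ e` for every `i`: both say `d * a i ∣ P`. So passing to the complementary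
divisor exchanges the common divisors of the `â i` with the common multiples of the `a i`
dividing `P`, and the gcd of the `â i` is complementary to the lcm of the `a i`.
-/

section
variable {α : Type*} [CommMonoidWithZero α] [IsCancelMulZero α]

theorem dvd_iff_dvd_of_mul_eq_mul {x y d e : α} (hx : x ≠ 0) (he : e ≠ 0)
    (h : x * y = d * e) : x ∣ d ↔ e ∣ y := by
  rw [← mul_dvd_mul_iff_right he, ← h, mul_dvd_mul_iff_left hx]

theorem forall_dvd_prod_erase_iff {ι : Type*} [Fintype ι] [DecidableEq ι] {a : ι → α}
    (ha : ∀ i, a i ≠ 0) {d e : α} (hd : d ≠ 0) (hde : d * e = ∏ i, a i) :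
    (∀ i, d ∣ ∏ j ∈ Finset.univ.erase i, a j) ↔ ∀ i, a i ∣ e :=
  forall_congr' fun i => dvd_iff_dvd_of_mul_eq_mul hd (ha i)
    (hde.trans (Finset.prod_erase_mul _ _ (Finset.mem_univ i)).symm)

end

section
variable {α : Type*} [CommMonoidWithZero α] [GCDMonoid α]

theorem List.dvd_foldr_gcd_iff {d : α} {l : List α} :
    d ∣ l.foldr gcd 0 ↔ ∀ x ∈ l, d ∣ x := by
  induction l with
  | nil => simp
  | cons x l ih => simp [_root_.dvd_gcd_iff, ih]

theorem List.foldr_lcm_dvd_iff {m : α} {l : List α} :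
    l.foldr lcm 1 ∣ m ↔ ∀ x ∈ l, x ∣ m := by
  induction l with
  | nil => simp
  | cons x l ih => simp [_root_.lcm_dvd_iff, ih]

theorem dvd_foldr_gcd_ofFn_iff {n : ℕ} {f : Fin n → α} {d : α} :
    d ∣ (List.ofFn f).foldr gcd 0 ↔ ∀ i, d ∣ f i := by
  rw [List.dvd_foldr_gcd_iff, List.forall_mem_ofFn_iff]

theorem foldr_lcm_ofFn_dvd_iff {n : ℕ} {f : Fin n → α} {m : α} :
    (List.ofFn f).foldr lcm 1 ∣ m ↔ ∀ i, f i ∣ m := by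
  rw [List.foldr_lcm_dvd_iff, List.forall_mem_ofFn_iff]

end

/-- Let `a 0, …, a (n-1)` (with `n ≥ 1`) be nonzero elements of a GCD
domain `R`, and for each `i` let `â i = ∏_{j ≠ i} a j`. Then
`gcd(â_1, …, â_n) ⬝ lcm(a_1, …, a_n)` is associated to `a_1 ⋯ a_n`, where the `n`-ary
gcd and lcm are the iterated binary ones. -/
theorem gcd_hat_mul_lcm {R : Type*} [CommRing R] [IsDomain R] [GCDMonoid R]
    {n : ℕ} (hn : 1 ≤ n) (a : Fin n → R) (ha : ∀ i, a i ≠ 0) :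
    Associated
      (((List.ofFn (fun i => ∏ j ∈ Finset.univ.erase i, a j)).foldr gcd 0) *
        ((List.ofFn a).foldr lcm 1))
      (∏ i, a i) := by
  set G := (List.ofFn (fun i => ∏ j ∈ Finset.univ.erase i, a j)).foldr gcd 0
  set L := (List.ofFn a).foldr lcm 1
  have hG_dvd : ∀ i, G ∣ ∏ j ∈ Finset.univ.erase i, a j := dvd_foldr_gcd_ofFn_iff.mp dvd_rfl
  have hP : ∏ i, a i ≠ 0 := Finset.prod_ne_zero_iff.mpr fun i _ => ha i
  obtain ⟨e, he⟩ : G ∣ ∏ i, a i :=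
    (hG_dvd ⟨0, hn⟩).trans (Finset.prod_dvd_prod_of_subset _ _ _ (Finset.subset_univ _))
  obtain ⟨c, hc⟩ : L ∣ ∏ i, a i :=
    foldr_lcm_ofFn_dvd_iff.mpr fun i => Finset.dvd_prod_of_mem a (Finset.mem_univ i)
  refine associated_of_dvd_dvd ?_ ?_
  · have hLe : L ∣ e := foldr_lcm_ofFn_dvd_iff.mpr <|
      (forall_dvd_prod_erase_iff ha (left_ne_zero_of_mul (he ▸ hP)) he.symm).mp hG_dvd
    rw [he]
    exact mul_dvd_mul_left G hLe
  · have hcG : c ∣ G := dvd_foldr_gcd_ofFn_iff.mpr <|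
      (forall_dvd_prod_erase_iff ha (right_ne_zero_of_mul (hc ▸ hP)) (by rw [hc, mul_comm])).mpr
        (foldr_lcm_ofFn_dvd_iff.mp dvd_rfl)
    rw [hc, mul_comm G]
    exact mul_dvd_mul_left L hcG
end

section
/- Let F_1, …, F_n ∈ R̂_G be splines. Then for every vertex i the vertex label m i divides the determinant |F_1, …, F_n|, and for every edge e = {u, v} of G the edge label r e divides |F_1, …, F_n|. -/
/-- A spline on the edge-labeled graph `(G, m, r)`: a vertex labeling `f` such that
`m i ∣ f i` at each vertex `i` and `r e ∣ f u - f v` for each edge `e = s(u, v)` of `G`. -/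
def IsSpline {R : Type*} [CommRing R] {n : ℕ} (G : SimpleGraph (Fin n))
    (m : Fin n → R) (r : Sym2 (Fin n) → R) (f : Fin n → R) : Prop :=
  (∀ i, m i ∣ f i) ∧ ∀ u v, G.Adj u v → r s(u, v) ∣ f u - f v

lemma row_dvd_det {R : Type*} [CommRing R] {n : ℕ} (M : Matrix (Fin n) (Fin n) R)
    (a : R) (i : Fin n) (h : ∀ j, a ∣ M i j) : a ∣ M.det := by
  rw [Matrix.det_apply]
  refine Finset.dvd_sum fun σ _ => ?_
  have : a ∣ ∏ x, M (σ x) x := by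
    have := Finset.dvd_prod_of_mem (fun x => M (σ x) x) (Finset.mem_univ (σ⁻¹ i))
    have h2 : M i (σ⁻¹ i) ∣ ∏ x, M (σ x) x := by simpa using this
    exact (h (σ⁻¹ i)).trans h2
  rcases this with ⟨c, hc⟩
  exact ⟨Equiv.Perm.sign σ • c, by rw [hc, Units.smul_def, Units.smul_def, zsmul_eq_mul, zsmul_eq_mul]; ring⟩

/-- For splines `F 1, …, F n` on `(G, m, r)`, every vertex label `m i`
divides the determinant `|F_1, …, F_n|`, and every edge label `r s(u,v)` (for `u v` an
edge of `G`) divides `|F_1, …, F_n|`. -/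
theorem labels_dvd_det {R : Type*} [CommRing R] {n : ℕ} (hn : 1 ≤ n)
    (G : SimpleGraph (Fin n)) (m : Fin n → R) (r : Sym2 (Fin n) → R)
    (F : Fin n → Fin n → R) (hF : ∀ j, IsSpline G m r (F j)) :
    (∀ i, m i ∣ (Matrix.of fun i j => F j i).det) ∧
      (∀ u v, G.Adj u v → r s(u, v) ∣ (Matrix.of fun i j => F j i).det) := by
  set M : Matrix (Fin n) (Fin n) R := Matrix.of fun i j => F j i with hM
  constructor
  · intro i
    exact row_dvd_det M (m i) i fun j => (hF j).1 i
  · intro u v huv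
    have hvu : v ≠ u := huv.symm.ne
    have hdet : (M.updateRow v (M v + (-1 : R) • M u)).det = M.det :=
      Matrix.det_updateRow_add_smul_self M hvu (-1)
    rw [← hdet]
    refine row_dvd_det _ _ v fun j => ?_
    rw [Matrix.updateRow_self]
    have : M v j + (-1 : R) • M u j = -(F j u - F j v) := by
      simp [hM, Matrix.of_apply]; ring
    show r s(u, v) ∣ M v j + (-1 : R) • M u j
    rw [this]
    exact dvd_neg.2 ((hF j).2 u v huv)
end

section
/- Assume the labels are pairwise coprime. If {F_1, …, F_n} is an R-module basis of R̂_G (the F_i are splines, R-linearly independent, and every spline is an R-linear combination of them), then |F_1, …, F_n| = u · Q for some unit u ∈ R. -/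
open Finset

section Aux
set_option linter.unusedSectionVars false
variable {R : Type*} [CommRing R] [IsDomain R] [GCDMonoid R]

theorem aux_dvd_det_of_row_dvd {n : ℕ} (M : Matrix (Fin n) (Fin n) R) (i : Fin n) (a : R)
    (h : ∀ j, a ∣ M i j) : a ∣ M.det := by
  choose v hv using h
  have hM : M = M.updateRow i (a • v) := by
    ext i' j
    rcases eq_or_ne i' i with rfl | hne
    · simpa using hv j
    · simp [Matrix.updateRow_ne hne]
  calc a ∣ a * (M.updateRow i v).det := dvd_mul_right _ _
  _ = (M.updateRow i (a • v)).det := (Matrix.det_updateRow_smul M i a v).symm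
  _ = M.det := by rw [← hM]

theorem aux_prod_dvd {ι : Type*} {z : R} (s : Finset ι) (f : ι → R)
    (h : ∀ i ∈ s, ∀ j ∈ s, i ≠ j → IsRelPrime (f i) (f j))
    (hd : ∀ i ∈ s, f i ∣ z) : ∏ i ∈ s, f i ∣ z := by
  induction s using Finset.cons_induction with
  | empty => simpa using one_dvd z
  | cons a t hat ih =>
    rw [Finset.prod_cons]
    have h1 : IsRelPrime (f a) (∏ i ∈ t, f i) :=
      IsRelPrime.prod_right fun i hi => h a (Finset.mem_cons_self a t) i
        (Finset.mem_cons.2 (Or.inr hi)) (by rintro rfl; exact hat hi)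
    exact h1.mul_dvd (hd a (Finset.mem_cons_self a t))
      (ih (fun i hi j hj => h i (Finset.mem_cons.2 (Or.inr hi)) j (Finset.mem_cons.2 (Or.inr hj)))
        (fun i hi => hd i (Finset.mem_cons.2 (Or.inr hi))))

theorem aux_swap {n : ℕ} (E : Finset (Sym2 (Fin n))) (r : Sym2 (Fin n) → R)
    (p : Fin n → Sym2 (Fin n) → Prop) [∀ i e, Decidable (p i e)] :
    (∏ i : Fin n, ∏ e ∈ E.filter (p i), r e)
      = ∏ e ∈ E, r e ^ (Finset.univ.filter (fun i => p i e)).card := by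
  simp_rw [Finset.prod_filter]
  rw [Finset.prod_comm]
  refine Finset.prod_congr rfl fun e _ => ?_
  rw [← Finset.prod_filter, Finset.prod_const]

theorem aux_factor {n : ℕ} (E : Finset (Sym2 (Fin n))) (r : Sym2 (Fin n) → R)
    (k : Sym2 (Fin n) → ℕ) (hk : ∀ e ∈ E, 1 ≤ k e) :
    ∏ e ∈ E, r e ^ k e = (∏ e ∈ E, r e) * ∏ e ∈ E, r e ^ (k e - 1) := by
  rw [← Finset.prod_mul_distrib]
  refine Finset.prod_congr rfl fun e he => ?_
  conv_lhs => rw [show k e = (k e - 1) + 1 from (Nat.succ_pred_eq_of_pos (hk e he)).symm]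
  rw [pow_succ, mul_comm]

end Aux



/-- Assume the labels are nonzero and pairwise relatively prime. If
`{F 1, …, F n}` is an `R`-module basis of the spline module (each `F j` is a spline, the
family is linearly independent, and every spline lies in its span), then
`|F_1, …, F_n| = u ⬝ Q` for some unit `u`, where
`Q = (∏ i, m i) * (∏ e ∈ E(G), r e)`. -/
theorem det_of_basis_eq_unit_mul_Q {R : Type*} [CommRing R] [IsDomain R] [GCDMonoid R]
    {n : ℕ} (hn : 1 ≤ n)
    (G : SimpleGraph (Fin n)) [DecidableRel G.Adj]
    (m : Fin n → R) (r : Sym2 (Fin n) → R)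
    (hm0 : ∀ i, m i ≠ 0) (hr0 : ∀ e ∈ G.edgeSet, r e ≠ 0)
    (hmm : ∀ i j, i ≠ j → IsRelPrime (m i) (m j))
    (hmr : ∀ i, ∀ e ∈ G.edgeSet, IsRelPrime (m i) (r e))
    (hrr : ∀ e ∈ G.edgeSet, ∀ e' ∈ G.edgeSet, e ≠ e' → IsRelPrime (r e) (r e'))
    (F : Fin n → Fin n → R) (hF : ∀ j, IsSpline G m r (F j))
    (hFi : LinearIndependent R F)
    (hFs : ∀ f, IsSpline G m r f → f ∈ Submodule.span R (Set.range F)) :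
    ∃ u : Rˣ,
      (Matrix.of fun i j => F j i).det =
        u * ((∏ i, m i) * (∏ e ∈ G.edgeFinset, r e)) := by
  classical
  set M : Matrix (Fin n) (Fin n) R := Matrix.of fun i j => F j i with hMdef
  set s : R := ∏ i, m i with hsdef
  set P : R := ∏ e ∈ G.edgeFinset, r e with hPdef
  -- Step A : Q ∣ det M
  have hmd : ∀ i, m i ∣ M.det := fun i =>
    aux_dvd_det_of_row_dvd M i (m i) fun j => (hF j).1 i
  have hrd : ∀ e ∈ G.edgeFinset, r e ∣ M.det := by
    intro e he
    rw [SimpleGraph.mem_edgeFinset] at he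
    induction e using Sym2.ind with
    | _ u v =>
      have hadj : G.Adj u v := he
      have hne : u ≠ v := hadj.ne
      rw [← Matrix.det_updateRow_add_smul_self M hne (-1 : R)]
      refine aux_dvd_det_of_row_dvd _ u _ fun j => ?_
      have hentry : (M.updateRow u (M u + (-1 : R) • M v)) u j = F j u - F j v := by
        simp [hMdef]
        ring
      rw [hentry]
      exact (hF j).2 u v hadj
  have h1 : s ∣ M.det := aux_prod_dvd univ m (fun i _ j _ hij => hmm i j hij) (fun i _ => hmd i)
  have h2 : P ∣ M.det :=
    aux_prod_dvd G.edgeFinset r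
      (fun e he e' he' hne =>
        hrr e (SimpleGraph.mem_edgeFinset.1 he) e' (SimpleGraph.mem_edgeFinset.1 he') hne) hrd
  have hsP : IsRelPrime s P :=
    IsRelPrime.prod_left fun i _ =>
      IsRelPrime.prod_right fun e he => hmr i e (SimpleGraph.mem_edgeFinset.1 he)
  obtain ⟨c, hc⟩ : s * P ∣ M.det := hsP.mul_dvd h1 h2
  have hs0 : s ≠ 0 := Finset.prod_ne_zero_iff.2 fun i _ => hm0 i
  have hP0 : P ≠ 0 :=
    Finset.prod_ne_zero_iff.2 fun e he => hr0 e (SimpleGraph.mem_edgeFinset.1 he)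
  have hQ0 : s * P ≠ 0 := mul_ne_zero hs0 hP0
  -- Step B : det M divides det of any spline family
  have key : ∀ g : Fin n → Fin n → R, (∀ j, IsSpline G m r (g j)) →
      M.det ∣ (Matrix.of fun i j => g j i).det := by
    intro g hg
    choose A hA using fun j => (Submodule.mem_span_range_iff_exists_fun R).1 (hFs (g j) (hg j))
    have hfac : (Matrix.of fun i j => g j i) = M * Matrix.of (fun k j => A j k) := by
      ext i j
      rw [Matrix.mul_apply]
      have hji := congrFun (hA j) i
      rw [Finset.sum_apply] at hji
      simp only [Pi.smul_apply, smul_eq_mul] at hji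
      rw [Matrix.of_apply, ← hji]
      exact Finset.sum_congr rfl fun k _ => mul_comm _ _
    rw [hfac, Matrix.det_mul]
    exact dvd_mul_right _ _
  -- Step C : the diagonal spline family
  set q : Fin n → R := fun i => m i * ∏ e ∈ G.edgeFinset.filter (fun e => i ∈ e), r e with hqdef
  have hq : ∀ i : Fin n, IsSpline G m r (fun v => if v = i then q i else 0) := by
    intro i
    constructor
    · intro v
      by_cases h : v = i
      · subst h
        show m v ∣ if v = v then q v else 0
        rw [if_pos rfl]
        exact dvd_mul_right _ _
      · show m v ∣ if v = i then q i else 0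
        rw [if_neg h]
        exact dvd_zero _
    · intro u v hadj
      have hne : u ≠ v := hadj.ne
      have hmem : s(u, v) ∈ G.edgeFinset := SimpleGraph.mem_edgeFinset.2 hadj
      show r s(u, v) ∣ (if u = i then q i else 0) - (if v = i then q i else 0)
      by_cases hu : u = i
      · subst hu
        rw [if_pos rfl, if_neg (fun h => hne h.symm), sub_zero]
        exact Dvd.dvd.mul_left
          (Finset.dvd_prod_of_mem r (Finset.mem_filter.2 ⟨hmem, Sym2.mem_mk_left u v⟩)) (m u)
      · by_cases hv : v = i
        · subst hv
          rw [if_neg hu, if_pos rfl, zero_sub, dvd_neg]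
          exact Dvd.dvd.mul_left
            (Finset.dvd_prod_of_mem r (Finset.mem_filter.2 ⟨hmem, Sym2.mem_mk_right u v⟩)) (m v)
        · rw [if_neg hu, if_neg hv, sub_zero]
          exact dvd_zero _
  have hdq : M.det ∣ ∏ i, q i := by
    have h := key (fun i v => if v = i then q i else 0) hq
    have hdiag : (Matrix.of fun v i => if v = i then q i else 0) = Matrix.diagonal q := by
      ext v i
      by_cases h : v = i
      · subst h; simp [Matrix.diagonal]
      · simp [Matrix.diagonal, h]
    rwa [hdiag, Matrix.det_diagonal] at h
  have hqprod : ∏ i, q i =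
      (s * P) * ∏ e ∈ G.edgeFinset, r e ^ ((univ.filter (fun i => i ∈ e)).card - 1) := by
    have h1 : ∏ i, q i = s * ∏ i : Fin n, ∏ e ∈ G.edgeFinset.filter (fun e => i ∈ e), r e := by
      rw [hqdef, Finset.prod_mul_distrib, hsdef]
    have hcard : ∀ e ∈ G.edgeFinset, 1 ≤ (univ.filter (fun i => i ∈ e)).card := by
      intro e _
      have hex : ∃ i, i ∈ e := Sym2.ind (fun a b => ⟨a, Sym2.mem_mk_left a b⟩) e
      obtain ⟨i, hi⟩ := hex
      exact Finset.card_pos.2 ⟨i, Finset.mem_filter.2 ⟨Finset.mem_univ i, hi⟩⟩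
    rw [h1, aux_swap, aux_factor _ _ _ hcard, hPdef]
    ring
  have hcY : c ∣ ∏ e ∈ G.edgeFinset, r e ^ ((univ.filter (fun i => i ∈ e)).card - 1) := by
    have h := hdq
    rw [hc, hqprod] at h
    exact (mul_dvd_mul_iff_left hQ0).1 h
  -- Step D : c is relatively prime to each edge label
  have hcr : ∀ e0 ∈ G.edgeFinset, IsRelPrime c (r e0) := by
    intro e0 he0
    induction e0 using Sym2.ind with
    | _ u0 v0 =>
    have hadj0 : G.Adj u0 v0 := SimpleGraph.mem_edgeFinset.1 he0
    have hne0 : u0 ≠ v0 := hadj0.ne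
    have h2n : 1 < n := by
      by_contra h
      push_neg at h
      exact hne0 (Fin.ext (by omega))
    set c1 : Fin n := ⟨0, by omega⟩ with hc1
    set c2 : Fin n := ⟨1, h2n⟩ with hc2
    set τ : Equiv.Perm (Fin n) := Equiv.swap u0 c1 with hτ
    set σ : Equiv.Perm (Fin n) := τ.trans (Equiv.swap (τ v0) c2) with hσ
    have hτu : τ u0 = c1 := Equiv.swap_apply_left u0 c1
    have hσu : σ u0 = c1 := by
      have h2 : c1 ≠ τ v0 := by
        rw [← hτu]
        exact fun h => hne0 (τ.injective h)
      have h3 : c1 ≠ c2 := by simp [hc1, hc2, Fin.ext_iff]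
      rw [hσ, Equiv.trans_apply, hτu, Equiv.swap_apply_of_ne_of_ne h2 h3]
    have hσv : σ v0 = c2 := by
      rw [hσ, Equiv.trans_apply, Equiv.swap_apply_left]
    set cross : Fin n → Sym2 (Fin n) → Prop :=
      fun i e => (∃ a ∈ e, σ a < i) ∧ ∃ b ∈ e, i ≤ σ b with hcross
    set t : Fin n → R := fun i => s * ∏ e ∈ G.edgeFinset.filter (cross i), r e with ht
    have hgs : ∀ i, IsSpline G m r (fun v => if i ≤ σ v then t i else 0) := by
      intro i
      constructor
      · intro v
        show m v ∣ if i ≤ σ v then t i else 0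
        by_cases h : i ≤ σ v
        · rw [if_pos h]
          exact Dvd.dvd.mul_right (Finset.dvd_prod_of_mem m (Finset.mem_univ v)) _
        · rw [if_neg h]
          exact dvd_zero _
      · intro u v hadj
        have hmem : s(u, v) ∈ G.edgeFinset := SimpleGraph.mem_edgeFinset.2 hadj
        show r s(u, v) ∣ (if i ≤ σ u then t i else 0) - (if i ≤ σ v then t i else 0)
        by_cases hu : i ≤ σ u <;> by_cases hv : i ≤ σ v
        · rw [if_pos hu, if_pos hv, sub_self]
          exact dvd_zero _
        · rw [if_pos hu, if_neg hv, sub_zero]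
          refine Dvd.dvd.mul_left (Finset.dvd_prod_of_mem r (Finset.mem_filter.2
            ⟨hmem, ⟨v, Sym2.mem_mk_right u v, lt_of_not_ge hv⟩,
              ⟨u, Sym2.mem_mk_left u v, hu⟩⟩)) s
        · rw [if_neg hu, if_pos hv, zero_sub, dvd_neg]
          refine Dvd.dvd.mul_left (Finset.dvd_prod_of_mem r (Finset.mem_filter.2
            ⟨hmem, ⟨u, Sym2.mem_mk_left u v, lt_of_not_ge hu⟩,
              ⟨v, Sym2.mem_mk_right u v, hv⟩⟩)) s
        · rw [if_neg hu, if_neg hv, sub_zero]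
          exact dvd_zero _
    have hdet : M.det ∣ ∏ i, t i := by
      have h := key (fun i v => if i ≤ σ v then t i else 0) hgs
      set Pmat : Matrix (Fin n) (Fin n) R :=
        Matrix.of fun ρ i => if i ≤ ρ then t i else 0 with hPm
      have hsub : (Matrix.of fun v i => if i ≤ σ v then t i else 0) = Pmat.submatrix σ id := rfl
      have hlow : Pmat.BlockTriangular OrderDual.toDual := by
        intro ρ i hlt
        have hni : ¬ i ≤ ρ := not_le.2 hlt
        show (if i ≤ ρ then t i else 0) = 0
        rw [if_neg hni]
      have hPdet : Pmat.det = ∏ i, t i := by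
        rw [Matrix.det_of_lowerTriangular Pmat hlow]
        refine Finset.prod_congr rfl fun i _ => ?_
        show (if i ≤ i then t i else 0) = t i
        rw [if_pos le_rfl]
      rw [hsub, Matrix.det_permute, hPdet] at h
      rcases Int.units_eq_one_or (Equiv.Perm.sign σ) with hsg | hsg <;> rw [hsg] at h
      · simpa using h
      · simpa using h
    have hprod : ∏ i, t i = s ^ n *
        ∏ e ∈ G.edgeFinset, r e ^ (univ.filter (fun i => cross i e)).card := by
      rw [ht]
      rw [Finset.prod_mul_distrib, Finset.prod_const, Finset.card_univ, Fintype.card_fin,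
        aux_swap]
    have hcard1 : ∀ e ∈ G.edgeFinset, 1 ≤ (univ.filter (fun i => cross i e)).card := by
      intro e he
      rw [SimpleGraph.mem_edgeFinset] at he
      induction e using Sym2.ind with
      | _ a b =>
        have hab : a ≠ b := ((SimpleGraph.mem_edgeSet G).1 he).ne
        have hσab : σ a ≠ σ b := fun h => hab (σ.injective h)
        refine Finset.card_pos.2 ?_
        rcases Ne.lt_or_gt hσab with hlt | hlt
        · exact ⟨σ b, Finset.mem_filter.2 ⟨Finset.mem_univ _,
            ⟨a, Sym2.mem_mk_left a b, hlt⟩, ⟨b, Sym2.mem_mk_right a b, le_refl _⟩⟩⟩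
        · exact ⟨σ a, Finset.mem_filter.2 ⟨Finset.mem_univ _,
            ⟨b, Sym2.mem_mk_right a b, hlt⟩, ⟨a, Sym2.mem_mk_left a b, le_refl _⟩⟩⟩
    have hcard0 : (univ.filter (fun i => cross i s(u0, v0))).card = 1 := by
      have hset : (univ.filter (fun i => cross i s(u0, v0))) = {c2} := by
        ext i
        simp only [Finset.mem_filter, Finset.mem_univ, true_and, Finset.mem_singleton, hcross]
        constructor
        · rintro ⟨⟨a, ha, hai⟩, ⟨b, hb, hbi⟩⟩
          have ha' : σ a = c1 ∨ σ a = c2 := by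
            rcases Sym2.mem_iff.1 ha with rfl | rfl
            · exact Or.inl hσu
            · exact Or.inr hσv
          have hb' : σ b = c1 ∨ σ b = c2 := by
            rcases Sym2.mem_iff.1 hb with rfl | rfl
            · exact Or.inl hσu
            · exact Or.inr hσv
          have h1 : (σ a : ℕ) < (i : ℕ) := hai
          have h2 : (i : ℕ) ≤ (σ b : ℕ) := hbi
          have hva : (σ a : ℕ) = 0 ∨ (σ a : ℕ) = 1 := by
            rcases ha' with h | h <;> rw [h] <;> simp [hc1, hc2]
          have hvb : (σ b : ℕ) = 0 ∨ (σ b : ℕ) = 1 := by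
            rcases hb' with h | h <;> rw [h] <;> simp [hc1, hc2]
          have : (i : ℕ) = 1 := by omega
          exact Fin.ext (by simpa [hc2] using this)
        · rintro rfl
          refine ⟨⟨u0, Sym2.mem_mk_left u0 v0, ?_⟩, ⟨v0, Sym2.mem_mk_right u0 v0, ?_⟩⟩
          · rw [hσu]
            show (c1 : ℕ) < (c2 : ℕ)
            simp [hc1, hc2]
          · rw [hσv]
      rw [hset, Finset.card_singleton]
    have hX : ∏ i, t i = (s * P) * (s ^ (n - 1) *
        ∏ e ∈ G.edgeFinset, r e ^ ((univ.filter (fun i => cross i e)).card - 1)) := by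
      rw [hprod, aux_factor _ _ _ hcard1, hPdef]
      rw [show s ^ n = s * s ^ (n - 1) by
        conv_lhs => rw [show n = (n - 1) + 1 by omega]
        rw [pow_succ, mul_comm]]
      ring
    have hcX : c ∣ s ^ (n - 1) *
        ∏ e ∈ G.edgeFinset, r e ^ ((univ.filter (fun i => cross i e)).card - 1) := by
      have h := hdet
      rw [hc, hX] at h
      exact (mul_dvd_mul_iff_left hQ0).1 h
    have hrel : IsRelPrime (r s(u0, v0)) (s ^ (n - 1) *
        ∏ e ∈ G.edgeFinset, r e ^ ((univ.filter (fun i => cross i e)).card - 1)) := by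
      have hes : s(u0, v0) ∈ G.edgeSet := SimpleGraph.mem_edgeFinset.1 he0
      refine IsRelPrime.mul_right ?_ ?_
      · exact (IsRelPrime.prod_right (t := univ)
          (fun i _ => (hmr i _ hes).symm)).pow_right
      · refine IsRelPrime.prod_right fun e he => ?_
        by_cases hee : e = s(u0, v0)
        · rw [hee, hcard0]
          simpa using isRelPrime_one_right
        · exact (hrr _ hes e (SimpleGraph.mem_edgeFinset.1 he) (fun h => hee h.symm)).pow_right
    exact fun d hdc hdr => hrel hdr (hdc.trans hcX)
  -- Conclusion
  have hrelY : IsRelPrime c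
      (∏ e ∈ G.edgeFinset, r e ^ ((univ.filter (fun i => i ∈ e)).card - 1)) :=
    IsRelPrime.prod_right fun e he => (hcr e he).pow_right
  have hcu : IsUnit c := hrelY dvd_rfl hcY
  refine ⟨hcu.unit, ?_⟩
  rw [hc, IsUnit.unit_spec]
  ring
end

section
/- Assume the labels are pairwise coprime. If the splines F_1, …, F_n ∈ R̂_G satisfy |F_1, …, F_n| = u · Q for some unit u ∈ R, then {F_1, …, F_n} is an R-module basis of R̂_G (the family is R-linearly independent and every spline is an R-linear combination of F_1, …, F_n). -/
section Aux

variable {R : Type*} [CommRing R]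

/-- If `c` divides every entry of row `u` of `M`, then `c` divides `det M`. -/
lemma dvd_det_of_dvd_row {n : ℕ} (M : Matrix (Fin n) (Fin n) R) (u : Fin n) (c : R)
    (h : ∀ j, c ∣ M u j) : c ∣ M.det := by
  rw [← Matrix.det_transpose, Matrix.det_apply']
  refine Finset.dvd_sum fun σ _ => Dvd.dvd.mul_left ?_ _
  exact dvd_trans (h (σ u)) (Finset.dvd_prod_of_mem _ (Finset.mem_univ u))

/-- If `c` divides every entry of the difference of rows `p` and `q` of `M` (`p ≠ q`), then
`c` divides `det M`. -/
lemma dvd_det_of_dvd_row_sub {n : ℕ} (M : Matrix (Fin n) (Fin n) R) (p q : Fin n)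
    (hpq : p ≠ q) (c : R) (h : ∀ j, c ∣ M p j - M q j) : c ∣ M.det := by
  rw [← Matrix.det_updateRow_add_smul_self M hpq (-1)]
  refine dvd_det_of_dvd_row _ p c fun j => ?_
  rw [Matrix.updateRow_self]
  simpa [sub_eq_add_neg] using h j

/-- In a ring, a finite family of pairwise relatively prime elements each dividing `x` has
product dividing `x` (requires `IsRelPrime.mul_dvd`, available in decomposition monoids). -/
lemma prod_dvd_of_pairwise_isRelPrime [IsDomain R] [GCDMonoid R] {ι : Type*} {x : R}
    (t : Finset ι) (g : ι → R)
    (hcop : ∀ i ∈ t, ∀ j ∈ t, i ≠ j → IsRelPrime (g i) (g j))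
    (hdvd : ∀ i ∈ t, g i ∣ x) : ∏ i ∈ t, g i ∣ x := by
  classical
  induction t using Finset.induction_on with
  | empty => simpa using one_dvd x
  | @insert a t ha ih =>
    rw [Finset.prod_insert ha]
    refine IsRelPrime.mul_dvd ?_ (hdvd a (Finset.mem_insert_self a t)) ?_
    · exact IsRelPrime.prod_right fun i hi =>
        hcop a (Finset.mem_insert_self a t) i (Finset.mem_insert_of_mem hi)
        (fun h => ha (h ▸ hi))
    · exact ih (fun i hi j hj => hcop i (Finset.mem_insert_of_mem hi) j
        (Finset.mem_insert_of_mem hj)) (fun i hi => hdvd i (Finset.mem_insert_of_mem hi))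

end Aux

/-- Key divisibility: `Q` divides the determinant of any matrix whose columns are splines. -/
lemma Q_dvd_det {R : Type*} [CommRing R] [IsDomain R] [GCDMonoid R]
    {n : ℕ}
    (G : SimpleGraph (Fin n)) [DecidableRel G.Adj]
    (m : Fin n → R) (r : Sym2 (Fin n) → R)
    (hmm : ∀ i j, i ≠ j → IsRelPrime (m i) (m j))
    (hmr : ∀ i, ∀ e ∈ G.edgeSet, IsRelPrime (m i) (r e))
    (hrr : ∀ e ∈ G.edgeSet, ∀ e' ∈ G.edgeSet, e ≠ e' → IsRelPrime (r e) (r e'))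
    (M : Matrix (Fin n) (Fin n) R) (hM : ∀ j, IsSpline G m r (fun i => M i j)) :
    ((∏ i, m i) * (∏ e ∈ G.edgeFinset, r e)) ∣ M.det := by
  classical
  have hmdvd : ∀ i, m i ∣ M.det := fun i =>
    dvd_det_of_dvd_row M i (m i) fun j => (hM j).1 i
  have hrdvd : ∀ e ∈ G.edgeFinset, r e ∣ M.det := by
    intro e he
    rw [SimpleGraph.mem_edgeFinset] at he
    induction e with
    | _ p q =>
      have hadj : G.Adj p q := he
      exact dvd_det_of_dvd_row_sub M p q hadj.ne (r s(p, q)) fun j => (hM j).2 p q hadj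
  have h1 : (∏ i, m i) ∣ M.det :=
    prod_dvd_of_pairwise_isRelPrime Finset.univ m
      (fun i _ j _ hij => hmm i j hij) (fun i _ => hmdvd i)
  have h2 : (∏ e ∈ G.edgeFinset, r e) ∣ M.det :=
    prod_dvd_of_pairwise_isRelPrime G.edgeFinset r
      (fun e he e' he' hne => hrr e (SimpleGraph.mem_edgeFinset.mp he)
        e' (SimpleGraph.mem_edgeFinset.mp he') hne) hrdvd
  have hcop : IsRelPrime (∏ i, m i) (∏ e ∈ G.edgeFinset, r e) :=
    IsRelPrime.prod_left fun i _ => IsRelPrime.prod_right fun e he =>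
      hmr i e (SimpleGraph.mem_edgeFinset.mp he)
  exact hcop.mul_dvd h1 h2

/-- Assume the labels are nonzero and pairwise relatively prime. If the
splines `F 1, …, F n` satisfy `|F_1, …, F_n| = u ⬝ Q` for some unit `u`, where
`Q = (∏ i, m i) * (∏ e ∈ E(G), r e)`, then `{F 1, …, F n}` is an `R`-module basis of the
spline module: the family is linearly independent and every spline lies in its span. -/
theorem basis_of_det_eq_unit_mul_Q {R : Type*} [CommRing R] [IsDomain R] [GCDMonoid R]
    {n : ℕ} (hn : 1 ≤ n)
    (G : SimpleGraph (Fin n)) [DecidableRel G.Adj]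
    (m : Fin n → R) (r : Sym2 (Fin n) → R)
    (hm0 : ∀ i, m i ≠ 0) (hr0 : ∀ e ∈ G.edgeSet, r e ≠ 0)
    (hmm : ∀ i j, i ≠ j → IsRelPrime (m i) (m j))
    (hmr : ∀ i, ∀ e ∈ G.edgeSet, IsRelPrime (m i) (r e))
    (hrr : ∀ e ∈ G.edgeSet, ∀ e' ∈ G.edgeSet, e ≠ e' → IsRelPrime (r e) (r e'))
    (F : Fin n → Fin n → R) (hF : ∀ j, IsSpline G m r (F j))
    (u : Rˣ)
    (hdet : (Matrix.of fun i j => F j i).det =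
      u * ((∏ i, m i) * (∏ e ∈ G.edgeFinset, r e))) :
    LinearIndependent R F ∧
      ∀ f, IsSpline G m r f → f ∈ Submodule.span R (Set.range F) := by
  classical
  set A : Matrix (Fin n) (Fin n) R := Matrix.of fun i j => F j i with hA
  set Q : R := (∏ i, m i) * (∏ e ∈ G.edgeFinset, r e) with hQ
  have hQ0 : Q ≠ 0 := by
    refine mul_ne_zero (Finset.prod_ne_zero_iff.mpr fun i _ => hm0 i)
      (Finset.prod_ne_zero_iff.mpr fun e he => hr0 e (SimpleGraph.mem_edgeFinset.mp he))
  have hdet0 : A.det ≠ 0 := by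
    rw [hdet]
    exact mul_ne_zero (Units.ne_zero u) hQ0
  constructor
  · -- linear independence
    rw [Fintype.linearIndependent_iff]
    intro g hg j
    have hmv : A.mulVec g = 0 := by
      funext i
      have := congrFun hg i
      simpa [A, Matrix.mulVec, dotProduct, Finset.sum_apply, mul_comm] using this
    have : A.det • g = 0 := by
      have := congrArg (fun v => (Matrix.adjugate A).mulVec v) hmv
      simpa [Matrix.mulVec_mulVec, Matrix.adjugate_mul, Matrix.smul_mulVec] using this
    have := congrFun this j
    simp only [Pi.smul_apply, Pi.zero_apply, smul_eq_mul] at this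
    exact (mul_eq_zero.mp this).resolve_left hdet0
  · -- span
    intro f hf
    -- Cramer: each (A.updateColumn j f).det is divisible by Q
    have hcol : ∀ j : Fin n, Q ∣ (A.updateCol j f).det := by
      intro j
      refine Q_dvd_det G m r hmm hmr hrr _ ?_
      intro k
      by_cases hk : k = j
      · subst hk
        convert hf using 2 with i
        simp [Matrix.updateCol_self]
      · convert hF k using 2 with i
        simp [A, Matrix.updateCol_apply, hk]
    choose d hd using hcol
    -- A *ᵥ cramer f = det • f, and cramer f j = Q * d j
    have hcram : A.mulVec (A.cramer f) = A.det • f := Matrix.mulVec_cramer A f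
    have hcf : A.cramer f = fun j => Q * d j := by
      funext j
      rw [Matrix.cramer_apply, hd j]
    have key : ∀ i, Q * ((A.mulVec d) i) = Q * ((u : R) * f i) := by
      intro i
      have h1 := congrFun hcram i
      rw [hcf] at h1
      have h2 : (A.mulVec fun j => Q * d j) i = Q * (A.mulVec d) i := by
        simp [Matrix.mulVec, dotProduct, Finset.mul_sum]
        ring_nf
        exact Finset.sum_congr rfl fun j _ => by ring
      rw [h2] at h1
      rw [h1, hdet]
      simp [Pi.smul_apply, smul_eq_mul]
      ring
    have hAd : ∀ i, (A.mulVec d) i = (u : R) * f i := fun i =>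
      mul_left_cancel₀ hQ0 (key i)
    -- hence f = ∑ j (u⁻¹ * d j) • F j
    have hfe : f = ∑ j, (((u⁻¹ : Rˣ) : R) * d j) • F j := by
      funext i
      have : f i = ((u⁻¹ : Rˣ) : R) * (A.mulVec d) i := by
        rw [hAd i, ← mul_assoc]
        simp
      rw [this]
      simp only [Matrix.mulVec, dotProduct, Finset.sum_apply, Finset.mul_sum]
      refine Finset.sum_congr rfl fun j _ => ?_
      simp only [Pi.smul_apply, smul_eq_mul, A, Matrix.of_apply]
      ring
    rw [hfe]
    exact Submodule.sum_mem _ fun j _ =>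
      Submodule.smul_mem _ _ (Submodule.subset_span ⟨j, rfl⟩)
end

section
/- Let f ∈ R̂_G be a spline, let u and v be vertices of G, and let p be a walk in G from u to v. Then the greatest common divisor of the list of edge labels r e, as e ranges over the edges traversed by p, divides f u − f v in R. -/
/-- Let `f` be a spline, `u, v` vertices of `G`, and `p` a walk from `u`
to `v` in `G`. Then the gcd of the list of edge labels along `p` (the fold of the binary
gcd over the list, starting from `0`) divides `f u - f v`. -/
theorem walk_gcd_dvd {R : Type*} [CommRing R] [IsDomain R] [GCDMonoid R]
    {n : ℕ} (hn : 1 ≤ n)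
    (G : SimpleGraph (Fin n)) (m : Fin n → R) (r : Sym2 (Fin n) → R)
    (f : Fin n → R) (hf : IsSpline G m r f)
    (u v : Fin n) (p : G.Walk u v) :
    ((p.edges.map r).foldr gcd 0) ∣ f u - f v := by
  induction p with
  | nil => simp
  | cons h p ih =>
    rename_i a b c
    simp only [SimpleGraph.Walk.edges_cons, List.map_cons, List.foldr_cons]
    have h1 : gcd (r s(a, b)) ((p.edges.map r).foldr gcd 0) ∣ f a - f b :=
      (gcd_dvd_left _ _).trans (hf.2 a b h)
    have h2 : gcd (r s(a, b)) ((p.edges.map r).foldr gcd 0) ∣ f b - f c :=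
      (gcd_dvd_right _ _).trans ih
    have := dvd_add h1 h2
    simpa using this
end
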